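/- arXiv:1608.03762 — 3 statements merged into one kernel-verified Lean document; each statement's English description precedes it below -/
import Mathlib

section
/- Let p ≥ 1, q = exp(πi/(2p+1)), and r an odd integer with gcd(r, 2p+1) = 1. The (p+1)×(p+1) real matrix H with entries H_{ij} = (-1)^{ij} · (2^{ζ(i,j)}/√(2p+1)) · Re(q^{rij}) for 0 ≤ i,j ≤ p, where ζ(i,j) = (2 - δ_{i0} - δ_{j0})/2, is orthogonal. -/
open Real Finset

/-!
Since `r` and `2p+1` are odd, `r + (2p+1) = 2s` with `s` coprime to `2p+1`, and the sign
`(-1)^(ij)` is absorbed into the cosine: `H i j = c i * c j * cos (2π s i j / (2p+1)) / √(2p+1)`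
with `c 0 = 1`, `c j = √2` otherwise. The summand of `(H Hᵀ) i k` is symmetric under
`j ↦ 2p+1-j`, so the weights `c j ^ 2` turn the sum over `0 ≤ j ≤ p` into a sum over a full
period. There product-to-sum and the vanishing of sums of nontrivial roots of unity leave only
the terms with `2p+1 ∣ s (i ∓ k)`, which for `0 ≤ i, k ≤ p` forces `i = k`.
-/

theorem sum_range_cos_two_pi_mul_div {N : ℕ} (hN : N ≠ 0) (m : ℤ) :
    ∑ j ∈ range N, cos (2 * π * m * j / N) = if (N : ℤ) ∣ m then (N : ℝ) else 0 := by
  have hζ := Complex.isPrimitiveRoot_exp N hN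
  set w := Complex.exp (2 * π * Complex.I / N) ^ m with hw
  have hre (j : ℕ) : cos (2 * π * m * j / N) = (w ^ j).re := by
    rw [hw, ← Complex.exp_int_mul, ← Complex.exp_nat_mul, ← Complex.exp_ofReal_mul_I_re]
    congr 2
    push_cast
    ring
  simp_rw [hre, ← Complex.re_sum]
  split_ifs with hdvd
  · simp [hw, (hζ.zpow_eq_one_iff_dvd m).2 hdvd]
  · have hw1 : w ≠ 1 := fun h => hdvd ((hζ.zpow_eq_one_iff_dvd m).1 h)
    have hwN : w ^ N = 1 := by
      rw [hw, ← zpow_natCast, ← zpow_mul, mul_comm m, zpow_mul, zpow_natCast, hζ.pow_eq_one,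
        one_zpow]
    rw [geom_sum_eq hw1, hwN, sub_self, zero_div, Complex.zero_re]

theorem sum_range_cos_mul_cos {N : ℕ} (hN : N ≠ 0) (m n : ℤ) :
    ∑ j ∈ range N, cos (2 * π * m * j / N) * cos (2 * π * n * j / N) =
      ((if (N : ℤ) ∣ m - n then (N : ℝ) else 0) +
        if (N : ℤ) ∣ m + n then (N : ℝ) else 0) / 2 := by
  have hterm (j : ℕ) : cos (2 * π * m * j / N) * cos (2 * π * n * j / N) =
      (cos (2 * π * ↑(m - n) * j / N) + cos (2 * π * ↑(m + n) * j / N)) / 2 := by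
    rw [eq_div_iff two_ne_zero, mul_comm, ← mul_assoc, two_mul_cos_mul_cos]
    push_cast
    ring_nf
  simp_rw [hterm, ← sum_div, sum_add_distrib, sum_range_cos_two_pi_mul_div hN]

theorem cos_two_pi_mul_sub_div {N j : ℕ} (hN : N ≠ 0) (hj : j ≤ N) (m : ℤ) :
    cos (2 * π * m * ↑(N - j) / N) = cos (2 * π * m * j / N) := by
  have : 2 * π * m * ↑(N - j) / N = m * (2 * π) - 2 * π * m * j / N := by
    rw [Nat.cast_sub hj]
    field_simp
  rw [this, cos_int_mul_two_pi_sub]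

theorem sum_range_two_mul_add_one_eq (p : ℕ) (f : ℕ → ℝ)
    (hf : ∀ j ∈ Icc 1 p, f (2 * p + 1 - j) = f j) :
    ∑ j ∈ range (2 * p + 1), f j = ∑ j ∈ range (p + 1), (if j = 0 then 1 else 2) * f j := by
  have hupper : ∑ x ∈ range p, f (p + 1 + x) = ∑ x ∈ range p, f (x + 1) := by
    rw [← sum_range_reflect (fun x => f (x + 1))]
    refine sum_congr rfl fun x hx => ?_
    have hx : x < p := mem_range.1 hx
    rw [show p - 1 - x + 1 = p - x by omega, ← hf (p - x) (mem_Icc.2 ⟨by omega, by omega⟩)]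
    congr 1
    omega
  rw [show 2 * p + 1 = (p + 1) + p by ring, sum_range_add, hupper, sum_range_succ',
    sum_range_succ']
  simp only [Nat.add_one_ne_zero, if_false, if_true, ← mul_sum]
  ring

theorem eq_of_two_mul_add_one_dvd_sub {p i k : ℕ} (hi : i ≤ p) (hk : k ≤ p)
    (h : (2 * p + 1 : ℤ) ∣ (i : ℤ) - k) : i = k := by
  have := Int.eq_zero_of_abs_lt_dvd h (abs_sub_lt_iff.2 ⟨by omega, by omega⟩)
  omega

theorem eq_zero_of_two_mul_add_one_dvd_add {p i k : ℕ} (hi : i ≤ p) (hk : k ≤ p)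
    (h : (2 * p + 1 : ℤ) ∣ (i : ℤ) + k) : i = 0 ∧ k = 0 := by
  have := Int.eq_zero_of_abs_lt_dvd h (by rw [abs_of_nonneg (by positivity)]; omega)
  omega

noncomputable def dctWeight (n : ℕ) : ℝ := if n = 0 then 1 else √2

theorem dctWeight_pos (n : ℕ) : 0 < dctWeight n := by
  unfold dctWeight
  split_ifs <;> positivity

theorem dctWeight_sq (n : ℕ) : dctWeight n ^ 2 = if n = 0 then 1 else 2 := by
  unfold dctWeight
  split_ifs <;> simp

theorem sqrt_two_pow_eq_dctWeight_mul (i j : ℕ) :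
    √2 ^ (2 - (if i = 0 then 1 else 0) - (if j = 0 then 1 else 0)) =
      dctWeight i * dctWeight j := by
  unfold dctWeight
  split_ifs <;> simp [sq]

theorem sum_dctWeight_sq_mul_cos_mul_cos {p : ℕ} {s : ℤ} (hs : IsCoprime s (2 * p + 1))
    {i k : ℕ} (hi : i ≤ p) (hk : k ≤ p) :
    ∑ j ∈ range (p + 1), dctWeight j ^ 2 *
        (cos (2 * π * ↑(s * i) * j / ↑(2 * p + 1)) *
          cos (2 * π * ↑(s * k) * j / ↑(2 * p + 1))) =
      if i = k then ↑(2 * p + 1) / dctWeight i ^ 2 else 0 := by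
  have hN : 2 * p + 1 ≠ 0 := by omega
  simp_rw [dctWeight_sq]
  rw [← sum_range_two_mul_add_one_eq p _ fun j hj => by
    rw [cos_two_pi_mul_sub_div hN (by grind), cos_two_pi_mul_sub_div hN (by grind)]]
  have hsub : ((2 * p + 1 : ℕ) : ℤ) ∣ s * i - s * k ↔ i = k := by
    refine ⟨fun h => eq_of_two_mul_add_one_dvd_sub hi hk (hs.symm.dvd_of_dvd_mul_left ?_), ?_⟩
    · rw [mul_sub]
      exact_mod_cast h
    · rintro rfl
      simp
  have hadd : ((2 * p + 1 : ℕ) : ℤ) ∣ s * i + s * k ↔ i = 0 ∧ k = 0 := by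
    refine ⟨fun h =>
      eq_zero_of_two_mul_add_one_dvd_add hi hk (hs.symm.dvd_of_dvd_mul_left ?_), ?_⟩
    · rw [mul_add]
      exact_mod_cast h
    · rintro ⟨rfl, rfl⟩
      simp
  rw [sum_range_cos_mul_cos hN]
  simp only [hsub, hadd]
  by_cases hik : i = k
  · subst hik
    by_cases hi0 : i = 0 <;> simp [hi0]
  · have hik0 : ¬(i = 0 ∧ k = 0) := fun h => hik (h.1.trans h.2.symm)
    simp [hik, hik0]

theorem neg_one_pow_mul_cos_pi_mul_div {r s : ℤ} {N : ℝ} (hN : N ≠ 0) (hs : r + N = 2 * s)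
    (i j : ℕ) :
    (-1) ^ (i * j) * cos (π * r * i * j / N) = cos (2 * π * ↑(s * i) * j / N) := by
  rw [← cos_add_nat_mul_pi]
  congr 1
  push_cast
  rw [div_add' _ _ _ hN, div_left_inj' hN]
  linear_combination π * i * j * hs

theorem H_matrix_orthogonal_general (p : ℕ) (r : ℤ) (hr : Odd r)
    (hcop : Int.gcd r (2 * p + 1) = 1) :
    let H : Matrix (Fin (p + 1)) (Fin (p + 1)) ℝ := fun i j =>
      (-1 : ℝ) ^ ((i : ℕ) * (j : ℕ)) *
        (Real.sqrt 2 ^ (2 - (if (i : ℕ) = 0 then 1 else 0)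
            - (if (j : ℕ) = 0 then 1 else 0)) / Real.sqrt (2 * p + 1)) *
        Real.cos (Real.pi * r * (i : ℕ) * (j : ℕ) / (2 * p + 1))
    H * H.transpose = 1 := by
  intro H
  obtain ⟨s, hs⟩ : ∃ s : ℤ, r + (2 * p + 1) = 2 * s := by
    obtain ⟨t, rfl⟩ := hr
    exact ⟨t + p + 1, by ring⟩
  have hs_coprime : IsCoprime s (2 * p + 1) := by
    have h := (Int.isCoprime_iff_gcd_eq_one.2 hcop).add_mul_right_left 1
    rw [one_mul, hs] at h
    exact h.of_mul_left_right
  have hN : ((2 * p + 1 : ℕ) : ℝ) ≠ 0 := by positivity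
  have hH (i j : Fin (p + 1)) : H i j = dctWeight i * dctWeight j / √↑(2 * p + 1) *
      cos (2 * π * ↑(s * i) * j / ↑(2 * p + 1)) := by
    rw [← neg_one_pow_mul_cos_pi_mul_div hN (by push_cast; exact_mod_cast hs),
      ← sqrt_two_pow_eq_dctWeight_mul]
    push_cast
    ring
  ext i k
  calc (H * H.transpose) i k
      = dctWeight i * dctWeight k / ↑(2 * p + 1) * ∑ j ∈ range (p + 1), dctWeight j ^ 2 *
          (cos (2 * π * ↑(s * i) * j / ↑(2 * p + 1)) *
            cos (2 * π * ↑(s * k) * j / ↑(2 * p + 1))) := by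
        rw [Matrix.mul_apply, mul_sum, ← Fin.sum_univ_eq_sum_range]
        refine sum_congr rfl fun j _ => ?_
        rw [Matrix.transpose_apply, hH, hH]
        field_simp
        rw [Real.sq_sqrt (by positivity)]
    _ = (1 : Matrix (Fin (p + 1)) (Fin (p + 1)) ℝ) i k := by
        rw [sum_dctWeight_sq_mul_cos_mul_cos hs_coprime (Nat.le_of_lt_succ i.2)
          (Nat.le_of_lt_succ k.2), Matrix.one_apply]
        by_cases hik : i = k
        · subst hik
          have := dctWeight_pos i
          simp only [if_true]
          field_simp
        · rw [if_neg (Fin.val_injective.ne hik), if_neg hik, mul_zero]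

theorem H_matrix_orthogonal (p : ℕ) (hp : 1 ≤ p) (r : ℤ) (hr : Odd r)
    (hcop : Int.gcd r (2 * p + 1) = 1) :
    let H : Matrix (Fin (p + 1)) (Fin (p + 1)) ℝ := fun i j =>
      (-1 : ℝ) ^ ((i : ℕ) * (j : ℕ)) *
        (Real.sqrt 2 ^ (2 - (if (i : ℕ) = 0 then 1 else 0)
            - (if (j : ℕ) = 0 then 1 else 0)) / Real.sqrt (2 * p + 1)) *
        Real.cos (Real.pi * r * (i : ℕ) * (j : ℕ) / (2 * p + 1))
    H * H.transpose = 1 :=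
  H_matrix_orthogonal_general p r hr hcop
end

section
/- For p ≥ 1, r odd with gcd(r, 2p+1) = 1, and 1 ≤ j ≤ p, the summand exp((jπi/2)(j - (-1)^p + r - jr/(2p+1))) is invariant under replacing j by 2p+1-j. -/
open Complex Real

theorem summand_symmetry (p : ℕ) (hp : 1 ≤ p) (r : ℕ) (hr : Odd r)
    (hcop : Nat.Coprime r (2 * p + 1)) (j : ℕ) (hj1 : 1 ≤ j) (hj2 : j ≤ p) :
    Complex.exp (((j : ℂ) * Real.pi * Complex.I / 2) *
        ((j : ℂ) - (-1 : ℂ) ^ p + (r : ℂ) - (j : ℂ) * (r : ℂ) / ((2 * p + 1 : ℕ) : ℂ))) =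
    Complex.exp ((((2 * p + 1 - j : ℕ) : ℂ) * Real.pi * Complex.I / 2) *
        (((2 * p + 1 - j : ℕ) : ℂ) - (-1 : ℂ) ^ p + (r : ℂ) -
          ((2 * p + 1 - j : ℕ) : ℂ) * (r : ℂ) / ((2 * p + 1 : ℕ) : ℂ))) := by
  have hjle : j ≤ 2 * p + 1 := by omega
  have hn : ((2 * p + 1 : ℕ) : ℂ) ≠ 0 := by
    exact Nat.cast_ne_zero.mpr (by omega)
  obtain ⟨d, hd⟩ : ∃ d : ℤ, ((-1 : ℂ)) ^ p = (2 * (p : ℂ) + 1) - 4 * (d : ℂ) := by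
    rcases Nat.even_or_odd p with ⟨c, hc⟩ | ⟨c, hc⟩
    · refine ⟨c, ?_⟩
      have : (-1 : ℂ) ^ p = 1 := (Even.neg_one_pow ⟨c, hc⟩)
      rw [this, hc]; push_cast; ring
    · refine ⟨c + 1, ?_⟩
      have : (-1 : ℂ) ^ p = -1 := (Odd.neg_one_pow ⟨c, hc⟩)
      rw [this, hc]; push_cast; ring
  rw [Complex.exp_eq_exp_iff_exists_int]
  refine ⟨(2 * (j : ℤ) - (2 * (p : ℤ) + 1)) * d, ?_⟩
  have hcast : ((2 * p + 1 - j : ℕ) : ℂ) = 2 * (p : ℂ) + 1 - (j : ℂ) := by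
    rw [Nat.cast_sub hjle]; push_cast; ring
  rw [hcast, hd]
  have hn' : ((2 * p + 1 : ℕ) : ℂ) = 2 * (p : ℂ) + 1 := by push_cast; ring
  rw [hn'] at hn ⊢
  field_simp
  push_cast
  ring
end

section
/- For p ≥ 1, r odd coprime to 2p+1: writing the exponent E(j) = (jπ/2)(j - (-1)^p + r - jr/(2p+1)), for even j = 2l (1 ≤ l ≤ p) one has exp(iE(j)) = exp(-2πi r l²/(2p+1)), and for odd j = 2l - (2p+1) (p+1 ≤ l ≤ 2p) one also has exp(iE(j)) = exp(-2πi r l²/(2p+1)). -/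
open Complex Real

theorem reindex_to_gauss_sum (p : ℕ) (hp : 1 ≤ p) (r : ℕ) (hr : Odd r)
    (hcop : Nat.Coprime r (2 * p + 1)) :
    (∀ l : ℕ, 1 ≤ l → l ≤ p →
      Complex.exp (Complex.I * (((2 * l : ℕ) : ℂ) * Real.pi / 2) *
          (((2 * l : ℕ) : ℂ) - (-1 : ℂ) ^ p + (r : ℂ) -
            ((2 * l : ℕ) : ℂ) * (r : ℂ) / ((2 * p + 1 : ℕ) : ℂ))) =
        Complex.exp (-2 * Real.pi * Complex.I * (r : ℂ) * (l : ℂ) ^ 2 /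
          ((2 * p + 1 : ℕ) : ℂ))) ∧
    (∀ l : ℕ, p + 1 ≤ l → l ≤ 2 * p →
      Complex.exp (Complex.I * ((2 * (l : ℂ) - ((2 * p + 1 : ℕ) : ℂ)) * Real.pi / 2) *
          ((2 * (l : ℂ) - ((2 * p + 1 : ℕ) : ℂ)) - (-1 : ℂ) ^ p + (r : ℂ) -
            (2 * (l : ℂ) - ((2 * p + 1 : ℕ) : ℂ)) * (r : ℂ) / ((2 * p + 1 : ℕ) : ℂ))) =
        Complex.exp (-2 * Real.pi * Complex.I * (r : ℂ) * (l : ℂ) ^ 2 /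
          ((2 * p + 1 : ℕ) : ℂ))) := by
  obtain ⟨s, hs⟩ := hr
  have hN : ((2 * p + 1 : ℕ) : ℂ) ≠ 0 := Nat.cast_ne_zero.mpr (by omega)
  constructor
  · intro l _ _
    rw [Complex.exp_eq_exp_iff_exists_int]
    rcases Nat.even_or_odd p with he | ho
    · have hε : (-1 : ℂ) ^ p = 1 := he.neg_one_pow
      refine ⟨(l : ℤ) * (l + s), ?_⟩
      rw [hε]
      subst hs
      push_cast
      field_simp
      ring
    · have hε : (-1 : ℂ) ^ p = -1 := ho.neg_one_pow
      refine ⟨(l : ℤ) * (l + s + 1), ?_⟩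
      rw [hε]
      subst hs
      push_cast
      field_simp
      ring
  · intro l _ _
    rw [Complex.exp_eq_exp_iff_exists_int]
    rcases Nat.even_or_odd p with he | ho
    · have hε : (-1 : ℂ) ^ p = 1 := he.neg_one_pow
      obtain ⟨q, hq⟩ := he
      refine ⟨(l : ℤ) ^ 2 - l * (4 * q + 1) + l + 3 * l * s + q * (4 * q + 1)
          - (4 * q + 1) * s, ?_⟩
      rw [hε]
      have hp2 : p = 2 * q := by omega
      subst hs; subst hp2
      have hN' : (2 : ℂ) * (2 * (q : ℂ)) + 1 ≠ 0 := by
        have h0 : ((2 * (2 * q) + 1 : ℕ) : ℂ) ≠ 0 := Nat.cast_ne_zero.mpr (by omega)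
        push_cast at h0
        intro h; exact h0 (by linear_combination h)
      have hx : ((2 : ℂ) * (2 * (q : ℂ)) + 1) * ((2 : ℂ) * (2 * (q : ℂ)) + 1)⁻¹ = 1 :=
        mul_inv_cancel₀ hN'
      push_cast
      linear_combination (Complex.I * (Real.pi : ℂ) * (2 * (s : ℂ) + 1) *
        (2 * (l : ℂ) - ((2 : ℂ) * (2 * (q : ℂ)) + 1) / 2)) * hx
    · have hε : (-1 : ℂ) ^ p = -1 := ho.neg_one_pow
      obtain ⟨q, hq⟩ := ho
      refine ⟨(l : ℤ) ^ 2 - l * (4 * q + 3) + 2 * l + 3 * l * s + q * (4 * q + 3)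
          - (4 * q + 3) * s, ?_⟩
      rw [hε]
      subst hs; subst hq
      have hN' : (2 : ℂ) * (2 * (q : ℂ) + 1) + 1 ≠ 0 := by
        have h0 : ((2 * (2 * q + 1) + 1 : ℕ) : ℂ) ≠ 0 := Nat.cast_ne_zero.mpr (by omega)
        push_cast at h0
        intro h; exact h0 (by linear_combination h)
      have hx : ((2 : ℂ) * (2 * (q : ℂ) + 1) + 1) * ((2 : ℂ) * (2 * (q : ℂ) + 1) + 1)⁻¹ = 1 :=
        mul_inv_cancel₀ hN'
      push_cast
      linear_combination (Complex.I * (Real.pi : ℂ) * (2 * (s : ℂ) + 1) *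
        (2 * (l : ℂ) - ((2 : ℂ) * (2 * (q : ℂ) + 1) + 1) / 2)) * hx
end
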